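/- arXiv:2209.08640 — 5 statements merged into one kernel-verified Lean document; each statement's English description precedes it below -/
import Mathlib

section
/- For an odd integer n > 1 and an odd prime power q, the sum ∑_{d|n} μ(n/d)·q^d is congruent to 0 modulo 4. -/
open ArithmeticFunction in
/-- For an odd integer `n > 1` and an odd prime power `q`, the sum
`∑_{d ∣ n} μ(n/d) · q^d` is congruent to `0` modulo `4`. -/
theorem stmt_0 (n q : ℕ) (hn : Odd n) (hn1 : 1 < n) (hq : Odd q)
    (hqpp : ∃ p k : ℕ, p.Prime ∧ 0 < k ∧ q = p ^ k) :
    (4 : ℤ) ∣ ∑ d ∈ n.divisors, (moebius (n / d) : ℤ) * (q : ℤ) ^ d := by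
  have hsum : ∑ d ∈ n.divisors, (moebius (n / d) : ℤ) = 0 := by
    rw [Nat.sum_div_divisors]
    have h := congrArg (fun f : ArithmeticFunction ℤ => f n) moebius_mul_coe_zeta
    simp only [coe_mul_zeta_apply, one_apply] at h
    rw [h, if_neg (by omega)]
  rw [show (4:ℤ) = ((4:ℕ):ℤ) from rfl, ← ZMod.intCast_zmod_eq_zero_iff_dvd]
  push_cast
  have h2 : ((q : ZMod 4))^2 = 1 := by
    obtain ⟨m, rfl⟩ := hq
    have h4 : (4 : ZMod 4) = 0 := by decide
    push_cast
    linear_combination ((m : ZMod 4)^2 + m) * h4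
  have key : ∀ d ∈ n.divisors, (moebius (n / d) : ZMod 4) * (q : ZMod 4) ^ d
      = (moebius (n / d) : ZMod 4) * (q : ZMod 4) := by
    intro d hd
    obtain ⟨hdn, -⟩ := Nat.mem_divisors.mp hd
    obtain ⟨k, hk⟩ := hn.of_dvd_nat hdn
    rw [hk, pow_succ, pow_mul, h2, one_pow, one_mul]
  rw [Finset.sum_congr rfl key, ← Finset.sum_mul]
  have : (∑ d ∈ n.divisors, (moebius (n / d) : ZMod 4)) = 0 := by
    have := congrArg (fun x : ℤ => (x : ZMod 4)) hsum
    push_cast at this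
    simpa using this
  rw [this, zero_mul]
end

section
/- Let q be an odd integer and n = 2^m·n' with n' odd and m ≥ 2. Then ∑_{d|n'} μ(n'/d)·(q^{2^{m-1}})^d − δ_{1,n'} ≡ 0 (mod 2^{m+1}), where δ_{1,n'} = 1 if n' = 1 and 0 otherwise. -/
lemma aux_pow_two (q : ℤ) (hq : Odd q) : ∀ k : ℕ, (2:ℤ) ^ (k + 3) ∣ q ^ 2 ^ (k + 1) - 1 := by
  intro k
  induction k with
  | zero =>
    obtain ⟨t, rfl⟩ := hq
    have h2 : (2:ℤ) ∣ t * (t + 1) := (Int.even_mul_succ_self t).two_dvd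
    obtain ⟨s, hs⟩ := h2
    refine ⟨s, ?_⟩
    ring_nf
    ring_nf at hs
    linarith [hs]
  | succ n ih =>
    have h1 : q ^ 2 ^ (n + 2) - 1 = (q ^ 2 ^ (n + 1) - 1) * (q ^ 2 ^ (n + 1) + 1) := by
      rw [pow_succ, pow_mul]; ring
    have h2 : (2:ℤ) ∣ q ^ 2 ^ (n + 1) + 1 := by
      have : Odd (q ^ 2 ^ (n + 1)) := hq.pow
      obtain ⟨t, ht⟩ := this
      exact ⟨t + 1, by omega⟩
    rw [h1, show n + 1 + 3 = (n + 3) + 1 from rfl, pow_succ]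
    exact mul_dvd_mul ih h2

open ArithmeticFunction in
/-- For odd `q`, `m ≥ 2`, and odd `n'`:
`∑_{d ∣ n'} μ(n'/d)·(q^{2^{m-1}})^d − δ_{1,n'} ≡ 0 (mod 2^{m+1})`. -/
theorem stmt_1 (q : ℤ) (m n' : ℕ) (hq : Odd q) (hm : 2 ≤ m) (hn' : Odd n') :
    (2 : ℤ) ^ (m + 1) ∣
      (∑ d ∈ n'.divisors, (moebius (n' / d) : ℤ) * (q ^ 2 ^ (m - 1)) ^ d)
        - (if n' = 1 then 1 else 0) := by
  have hkey : (2:ℤ) ^ (m + 1) ∣ q ^ 2 ^ (m - 1) - 1 := by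
    obtain ⟨k, rfl⟩ : ∃ k, m = k + 2 := ⟨m - 2, by omega⟩
    simpa [show k + 2 + 1 = k + 3 from rfl] using aux_pow_two q hq k
  have hsum : (2:ℤ) ^ (m + 1) ∣
      (∑ d ∈ n'.divisors, (moebius (n' / d) : ℤ) * (q ^ 2 ^ (m - 1)) ^ d)
        - (∑ d ∈ n'.divisors, (moebius (n' / d) : ℤ)) := by
    rw [← Finset.sum_sub_distrib]
    refine Finset.dvd_sum fun d _ => ?_
    have h1 : (moebius (n' / d) : ℤ) * (q ^ 2 ^ (m - 1)) ^ d - (moebius (n' / d) : ℤ)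
        = (moebius (n' / d) : ℤ) * ((q ^ 2 ^ (m - 1)) ^ d - 1 ^ d) := by ring
    rw [h1]
    exact Dvd.dvd.mul_left (hkey.trans (sub_dvd_pow_sub_pow _ 1 d)) _
  have hmu : (∑ d ∈ n'.divisors, (moebius (n' / d) : ℤ)) = (if n' = 1 then 1 else 0) := by
    rw [Nat.sum_div_divisors, ← coe_mul_zeta_apply, moebius_mul_coe_zeta, one_apply]
  rw [← hmu]
  exact hsum
end

section
/- Let G be a finite cyclic group of order n acting freely on a finite set S, and let φ be a G-equivariant permutation of S that acts transitively on the set of G-orbits (of which there are d) with φ^d acting on some orbit as the element a ∈ G. Then φ factors as a cyclic permutation of the d orbits followed by the action of a on one orbit, so, as a permutation of S, sgn(φ) = sgn(cyclic permutation of d blocks of size n) · sgn(a acting on one orbit). -/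
/-- Let `ℤ/n` act freely on a finite set `S` with `d` orbits (so `|S| = d·n`),
and let `φ` be an equivariant permutation of `S` which permutes the orbits
cyclically (acts transitively on the set of orbits), with `φ^d` acting on some
orbit as the element `a ∈ ℤ/n`.  Then, as a permutation of `S`,
`sgn(φ) = sgn(block d-cycle on d blocks of size n) · sgn(a acting on an orbit)`,
i.e. `sgn(φ) = ((−1)^{d+1})^n · sgn(x ↦ a + x : ℤ/n ≃ ℤ/n)`. -/
theorem stmt_11 (n d : ℕ) [NeZero n] (S : Type*) [Fintype S] [DecidableEq S]
    [AddAction (ZMod n) S]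
    (hfree : ∀ (g : ZMod n) (x : S), g +ᵥ x = x → g = 0)
    (φ : Equiv.Perm S)
    (hequiv : ∀ (g : ZMod n) (x : S), φ (g +ᵥ x) = g +ᵥ φ x)
    (hd : Nat.card (Quotient (AddAction.orbitRel (ZMod n) S)) = d)
    (htrans : ∀ x y : S, ∃ (k : ℕ) (g : ZMod n), (φ ^ k) x = g +ᵥ y)
    (a : ZMod n) (hx : ∃ x : S, (φ ^ d) x = a +ᵥ x) :
    Equiv.Perm.sign φ =
      ((-1 : ℤˣ) ^ (d + 1)) ^ n *
        Equiv.Perm.sign (Equiv.addLeft a : Equiv.Perm (ZMod n)) := by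
  classical
  obtain ⟨x₀, hx₀⟩ := hx
  -- d is positive
  have hdpos : 0 < d := by
    rw [← hd]
    have : Nonempty (Quotient (AddAction.orbitRel (ZMod n) S)) := ⟨⟦x₀⟧⟩
    exact Nat.card_pos
  obtain ⟨m, rfl⟩ : ∃ m, d = m + 1 := ⟨d - 1, (Nat.succ_pred_eq_of_pos hdpos).symm⟩
  set d := m + 1 with hdm
  -- powers of φ are equivariant
  have hpow : ∀ (k : ℕ) (g : ZMod n) (x : S), (φ ^ k) (g +ᵥ x) = g +ᵥ (φ ^ k) x := by
    intro k
    induction k with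
    | zero => intro g x; simp
    | succ k ih =>
      intro g x
      rw [pow_succ, Equiv.Perm.mul_apply, Equiv.Perm.mul_apply, hequiv, ih]
  -- powers of φ^d fix the orbit of x₀
  have hdq : ∀ q : ℕ, ∃ g : ZMod n, (φ ^ (d * q)) x₀ = g +ᵥ x₀ := by
    intro q
    induction q with
    | zero => exact ⟨0, by simp⟩
    | succ q ih =>
      obtain ⟨g, hg⟩ := ih
      refine ⟨a + g, ?_⟩
      have : d * (q + 1) = d * q + d := by ring
      rw [this, pow_add, Equiv.Perm.mul_apply, hx₀, hpow, hg, ← vadd_vadd]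
  have hmod : ∀ k : ℕ, ∃ g : ZMod n, (φ ^ k) x₀ = g +ᵥ (φ ^ (k % d)) x₀ := by
    intro k
    obtain ⟨g, hg⟩ := hdq (k / d)
    refine ⟨g, ?_⟩
    conv_lhs => rw [← Nat.mod_add_div k d]
    rw [pow_add, Equiv.Perm.mul_apply, hg, hpow]
  -- the classes of φ^i x₀ for i : Fin d exhaust the quotient
  set Q := Quotient (AddAction.orbitRel (ZMod n) S)
  have hrel : ∀ x y : S, (⟦x⟧ : Q) = ⟦y⟧ ↔ ∃ g : ZMod n, g +ᵥ y = x := by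
    intro x y
    rw [Quotient.eq]
    change AddAction.orbitRel (ZMod n) S x y ↔ _
    rw [AddAction.orbitRel_apply, AddAction.mem_orbit_iff]
  have Fsurj : Function.Surjective (fun i : Fin d => (⟦(φ ^ (i : ℕ)) x₀⟧ : Q)) := by
    intro q
    obtain ⟨y, rfl⟩ := Quotient.exists_rep q
    obtain ⟨k, g, hk⟩ := htrans x₀ y
    obtain ⟨h, hh⟩ := hmod k
    refine ⟨⟨k % d, Nat.mod_lt _ hdpos⟩, ?_⟩
    have h1 : (⟦(φ ^ (k % d)) x₀⟧ : Q) = ⟦(φ ^ k) x₀⟧ := ((hrel _ _).2 ⟨h, hh.symm⟩).symm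
    have h2 : (⟦(φ ^ k) x₀⟧ : Q) = ⟦y⟧ := (hrel _ _).2 ⟨g, hk.symm⟩
    exact h1.trans h2
  have Fbij : Function.Bijective (fun i : Fin d => (⟦(φ ^ (i : ℕ)) x₀⟧ : Q)) := by
    rw [Nat.bijective_iff_surjective_and_card]
    refine ⟨Fsurj, ?_⟩
    rw [hd]
    simp
  -- the bijection Fin d × ZMod n ≃ S
  have e0inj : Function.Injective
      (fun p : Fin d × ZMod n => p.2 +ᵥ (φ ^ (p.1 : ℕ)) x₀) := by
    rintro ⟨i, g⟩ ⟨j, h⟩ hij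
    simp only at hij
    have horb : (⟦(φ ^ (i : ℕ)) x₀⟧ : Q) = ⟦(φ ^ (j : ℕ)) x₀⟧ := by
      refine (hrel _ _).2 ⟨-g + h, ?_⟩
      have := congrArg (fun z => (-g) +ᵥ z) hij
      simpa [vadd_vadd] using this.symm
    have hij2 : i = j := Fbij.1 horb
    subst hij2
    have h3 : (-h + g) +ᵥ (φ ^ (i : ℕ)) x₀ = (φ ^ (i : ℕ)) x₀ := by
      have := congrArg (fun z => (-h) +ᵥ z) hij
      simpa [vadd_vadd] using this
    have h4 := hfree _ _ h3
    have h5 : g = h := by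
      have := congrArg (fun z => h + z) h4
      simpa [← add_assoc] using this
    simp [h5]
  have e0surj : Function.Surjective
      (fun p : Fin d × ZMod n => p.2 +ᵥ (φ ^ (p.1 : ℕ)) x₀) := by
    intro y
    obtain ⟨i, hi⟩ := Fsurj ⟦y⟧
    obtain ⟨g, hg⟩ := (hrel y ((φ ^ (i : ℕ)) x₀)).1 (by exact hi.symm)
    exact ⟨(i, g), hg⟩
  set e : Fin d × ZMod n ≃ S := Equiv.ofBijective _ ⟨e0inj, e0surj⟩ with he
  have he_apply : ∀ (i : Fin d) (g : ZMod n), e (i, g) = g +ᵥ (φ ^ (i : ℕ)) x₀ :=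
    fun i g => rfl
  -- the model permutation
  set f : ZMod n ≃ {p : Fin d × ZMod n // p.1 = Fin.last m} :=
    { toFun := fun g => ⟨(Fin.last m, g), rfl⟩
      invFun := fun p => p.1.2
      left_inv := fun g => rfl
      right_inv := fun p => by
        rcases p with ⟨⟨i, g⟩, hp⟩
        simp only at hp
        subst hp
        rfl } with hf
  set σ : Equiv.Perm (Fin d × ZMod n) := (Equiv.addLeft a).extendDomain f with hσ
  set c : Equiv.Perm (Fin d × ZMod n) :=
    Equiv.prodCongrLeft (fun _ : ZMod n => finRotate d) with hc
  set ψ : Equiv.Perm (Fin d × ZMod n) := c * σ with hψ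
  have key : φ = e.permCongr ψ := by
    ext y
    obtain ⟨⟨i, g⟩, rfl⟩ := e.surjective y
    rw [Equiv.permCongr_apply, Equiv.symm_apply_apply]
    by_cases hi : i = Fin.last m
    · subst hi
      have hσa : σ (Fin.last m, g) = (Fin.last m, a + g) := by
        have := (Equiv.addLeft a).extendDomain_apply_image f g
        simpa [hf] using this
      have : ψ (Fin.last m, g) = (0, a + g) := by
        rw [hψ, Equiv.Perm.mul_apply, hσa, hc]
        simp [Equiv.prodCongrLeft_apply]
      rw [this, he_apply, he_apply]
      have : (φ ^ (d : ℕ)) x₀ = a +ᵥ x₀ := hx₀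
      calc φ (g +ᵥ (φ ^ ((Fin.last m : Fin d) : ℕ)) x₀)
          = g +ᵥ φ ((φ ^ m) x₀) := by rw [hequiv]; rfl
        _ = g +ᵥ (φ ^ d) x₀ := by
            congr 1
            rw [hdm, pow_succ', Equiv.Perm.mul_apply]
        _ = g +ᵥ (a +ᵥ x₀) := by rw [hx₀]
        _ = (a + g) +ᵥ (φ ^ ((0 : Fin d) : ℕ)) x₀ := by
            rw [vadd_vadd, add_comm g a]; rfl
    · have hσa : σ (i, g) = (i, g) :=
        Equiv.Perm.extendDomain_apply_not_subtype _ f (by simpa using hi)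
      have hlt : (i : ℕ) + 1 < d := by
        have h1 : (i : ℕ) < d := i.isLt
        have h2 : (i : ℕ) ≠ m := fun h =>
          hi (Fin.ext (by simp [Fin.val_last, h]))
        omega
      have : ψ (i, g) = (i + 1, g) := by
        rw [hψ, Equiv.Perm.mul_apply, hσa, hc]
        simp [Equiv.prodCongrLeft_apply]
      rw [this, he_apply, he_apply]
      have hval : ((i + 1 : Fin d) : ℕ) = (i : ℕ) + 1 := by
        rw [Fin.val_add_one]
        simp [hi]
      rw [hval, pow_succ', Equiv.Perm.mul_apply, hequiv]
  rw [key, Equiv.Perm.sign_permCongr, hψ, map_mul]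
  have hsσ : Equiv.Perm.sign σ = Equiv.Perm.sign (Equiv.addLeft a) := by
    rw [hσ, Equiv.Perm.sign_extendDomain]
  have hsc : Equiv.Perm.sign c = ((-1 : ℤˣ) ^ (d + 1)) ^ n := by
    rw [hc, Equiv.Perm.sign_prodCongrLeft]
    rw [Finset.prod_const]
    rw [hdm, sign_finRotate]
    have hcard : (Finset.univ : Finset (ZMod n)).card = n := by
      simp [ZMod.card]
    rw [hcard]
    congr 1
    show ((-1 : ℤˣ)) ^ m = ((-1 : ℤˣ)) ^ (m + 2)
    rw [pow_add]
    norm_num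
  rw [hsσ, hsc]
end

section
/- Let q be an odd prime power, ℓ = ord_2(q−1), and α ∈ F_q a primitive 2^ℓ-th root of unity. Then the equation x^q = αx has exactly q − 1 nonzero solutions in F_{q^{2^ℓ}}, and none of these solutions lie in any proper subfield F_{q^{2^d}} with d < ℓ. -/
/-!
A nonzero solution of `x ^ q = α * x` is a `(q - 1)`-th root of `α` in the cyclic group `Kˣ`, whose
order is `(q - 1) * M` with `M = 1 + q + ⋯ + q ^ (2 ^ ℓ - 1)`. The `(q - 1)`-th powers are exactly
the elements killed by `M`, and `α ^ M = α ^ (2 ^ ℓ) = 1` because `α ^ q = α`; every fibre of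
`y ↦ y ^ (q - 1)` has `q - 1` elements. Iterating the equation gives `x ^ q ^ j = α ^ j * x`, and
`α ^ 2 ^ d ≠ 1` for `d < ℓ`.
-/

open Finset

theorem Nat.sub_one_mul_geom_sum (q n : ℕ) : (q - 1) * ∑ i ∈ range n, q ^ i = q ^ n - 1 := by
  rcases Nat.eq_zero_or_pos q with rfl | hq
  · cases n <;> simp
  · zify [hq, Nat.one_le_pow n q hq]
    exact mul_geom_sum (q : ℤ) n

theorem pow_pow_eq_pow_mul_of_pow_eq_mul {M : Type*} [CommMonoid M] {q : ℕ} {a x : M}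
    (ha : a ^ q = a) (hx : x ^ q = a * x) (k : ℕ) : x ^ q ^ k = a ^ k * x := by
  induction k with
  | zero => simp
  | succ k ih =>
    rw [pow_succ, pow_mul, ih, mul_pow, hx, ← pow_mul, mul_comm k, pow_mul, ha, ← mul_assoc,
      ← pow_succ]

section CyclicGroup

variable {G : Type*} [CommGroup G] [IsCyclic G] [Finite G] {k m : ℕ}

theorem IsCyclic.range_powMonoidHom_eq_ker (hG : Nat.card G = k * m) :
    (powMonoidHom k : G →* G).range = (powMonoidHom m).ker := by
  have hk : k ≠ 0 := by rintro rfl; simp [Nat.card_pos.ne'] at hG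
  refine Subgroup.eq_of_le_of_card_ge ?_ ?_
  · rintro _ ⟨y, rfl⟩
    simp [← pow_mul, ← hG, pow_card_eq_one']
  · rw [IsCyclic.card_powMonoidHom_ker, IsCyclic.card_powMonoidHom_range, hG,
      Nat.gcd_mul_right_left, Nat.gcd_eq_right (dvd_mul_left m k),
      Nat.mul_div_cancel_left _ (Nat.pos_of_ne_zero hk)]

theorem IsCyclic.card_pow_eq_of_pow_eq_one [Fintype G] [DecidableEq G] (hG : Nat.card G = k * m)
    {a : G} (ha : a ^ m = 1) : #{y : G | y ^ k = a} = k := by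
  have ha' : a ∈ (powMonoidHom k : G →* G).range := by
    rw [IsCyclic.range_powMonoidHom_eq_ker hG]; exact ha
  obtain ⟨y, rfl⟩ := ha'
  calc #{x : G | x ^ k = y ^ k} = #{x : G | x ^ k = 1} :=
        MonoidHom.card_fiber_eq_of_mem_range (powMonoidHom k : G →* G) ⟨y, rfl⟩ ⟨1, one_pow k⟩
    _ = Nat.card (powMonoidHom k : G →* G).ker := by
        rw [← Fintype.card_subtype, ← Nat.card_eq_fintype_card]; rfl
    _ = k := by rw [IsCyclic.card_powMonoidHom_ker, hG, Nat.gcd_mul_right_left]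

end CyclicGroup

theorem FiniteField.card_pow_eq_of_pow_eq_one {K : Type*} [Field K] [Fintype K] [DecidableEq K]
    {k m : ℕ} (hK : Fintype.card K - 1 = k * m) {a : K} (ha : a ^ m = 1) :
    #{x : K | x ≠ 0 ∧ x ^ k = a} = k := by
  have hm : m ≠ 0 := by
    rintro rfl
    have := Fintype.one_lt_card (α := K)
    omega
  obtain ⟨u, rfl⟩ := IsUnit.of_pow_eq_one ha hm
  calc #{x : K | x ≠ 0 ∧ x ^ k = u} = #{v : Kˣ | v ^ k = u} := by
        symm
        refine card_bij (fun (v : Kˣ) _ => (v : K)) ?_ ?_ ?_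
        · intro v hv
          simp only [mem_filter, mem_univ, true_and] at hv ⊢
          exact ⟨v.ne_zero, by rw [← Units.val_pow_eq_pow_val, hv]⟩
        · exact fun v _ w _ h => Units.ext h
        · intro x hx
          simp only [mem_filter, mem_univ, true_and] at hx
          exact ⟨Units.mk0 x hx.1, by simp [mem_filter, Units.ext_iff, hx.2], rfl⟩
    _ = k := by
        refine IsCyclic.card_pow_eq_of_pow_eq_one ?_ (Units.ext (by simpa using ha))
        rw [Nat.card_eq_fintype_card, Fintype.card_units, hK]

theorem stmt_13_general (q ℓ : ℕ) (hq1 : 1 < q)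
    (K : Type*) [Field K] [Fintype K] [DecidableEq K]
    (hcard : Fintype.card K = q ^ 2 ^ ℓ)
    (α : K) (hαq : α ^ q = α) (hord : orderOf α = 2 ^ ℓ) :
    (Finset.univ.filter fun x : K => x ≠ 0 ∧ x ^ q = α * x).card = q - 1 ∧
      ∀ x : K, x ≠ 0 → x ^ q = α * x → ∀ d < ℓ, x ^ q ^ 2 ^ d ≠ x := by
  constructor
  · have hsol (x : K) : x ≠ 0 ∧ x ^ q = α * x ↔ x ≠ 0 ∧ x ^ (q - 1) = α := by
      refine and_congr_right fun hx => ?_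
      rw [← pow_sub_one_mul (by omega : q ≠ 0), mul_left_inj' hx]
    have hαfix (i : ℕ) : α ^ q ^ i = α := by
      simpa using pow_pow_eq_pow_mul_of_pow_eq_mul (one_pow q) (hαq.trans (one_mul α).symm) i
    rw [filter_congr fun x _ => hsol x]
    refine FiniteField.card_pow_eq_of_pow_eq_one (m := ∑ i ∈ range (2 ^ ℓ), q ^ i) ?_ ?_
    · rw [hcard, Nat.sub_one_mul_geom_sum]
    · rw [← prod_pow_eq_pow_sum, prod_congr rfl fun i _ => hαfix i, prod_const, card_range, ← hord,
        pow_orderOf_eq_one]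
  · intro x hx hxq d hd hfix
    rw [pow_pow_eq_pow_mul_of_pow_eq_mul hαq hxq, mul_eq_right₀ hx] at hfix
    exact pow_ne_one_of_lt_orderOf (pow_ne_zero d two_ne_zero)
      (hord ▸ Nat.pow_lt_pow_right one_lt_two hd) hfix

/-- Let `q` be an odd prime power, `ℓ = ord₂(q−1)`, and `α` a primitive
`2^ℓ`-th root of unity lying in the prime subfield `F_q` of `K = F_{q^{2^ℓ}}`
(i.e. `α^q = α` and `α` has multiplicative order `2^ℓ`).  Then the equation
`x^q = α·x` has exactly `q − 1` nonzero solutions in `K`, and none of them lies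
in a proper subfield `F_{q^{2^d}}` with `d < ℓ` (i.e. none is fixed by
`Frob^{2^d}`). -/
theorem stmt_13 (q ℓ : ℕ) (hq : Odd q) (hq1 : 1 < q)
    (hqpp : ∃ p k : ℕ, p.Prime ∧ 0 < k ∧ q = p ^ k)
    (hℓ : padicValNat 2 (q - 1) = ℓ)
    (K : Type*) [Field K] [Fintype K] [DecidableEq K]
    (hcard : Fintype.card K = q ^ 2 ^ ℓ)
    (α : K) (hαq : α ^ q = α) (hord : orderOf α = 2 ^ ℓ) :
    (Finset.univ.filter fun x : K => x ≠ 0 ∧ x ^ q = α * x).card = q - 1 ∧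
      ∀ x : K, x ≠ 0 → x ^ q = α * x → ∀ d < ℓ, x ^ q ^ 2 ^ d ≠ x :=
  stmt_13_general q ℓ hq1 K hcard α hαq hord
end

section
/- Let X be a finite set equipped with an action of Z/m ⊕ Z/n (with Z/m generated by φ and Z/n generated by Fr) that is free on each factor separately. Every orbit has a well-defined type (d,a): d is the minimal positive integer with (d,0)·x = (0,a)·x for some 0 ≤ a < n, and for an orbit of type (d,a) one necessarily has d | m and m/d = n/gcd(n,a); in particular d = m if and only if a = 0. -/
/-- Let `S` be a finite set with an action of `ℤ/m ⊕ ℤ/n` which is free when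
restricted to each factor.  If the orbit of `x` has type `(d,a)` — i.e. `d` is
the minimal positive integer such that `(d,0)·x = (0,a)·x` for some `0 ≤ a < n`
— then `d ∣ m` and `m/d = n/gcd(n,a)`; in particular `d = m` iff `a = 0`. -/
theorem stmt_19 (m n : ℕ) [NeZero m] [NeZero n] (S : Type*) [Finite S]
    [AddAction (ZMod m × ZMod n) S]
    (hfree₁ : ∀ (g : ZMod m) (x : S), (g, (0 : ZMod n)) +ᵥ x = x → g = 0)
    (hfree₂ : ∀ (g : ZMod n) (x : S), ((0 : ZMod m), g) +ᵥ x = x → g = 0)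
    (x : S) (d a : ℕ) (hd : 0 < d) (ha : a < n)
    (htype : ((d : ZMod m), (0 : ZMod n)) +ᵥ x = ((0 : ZMod m), (a : ZMod n)) +ᵥ x)
    (hmin : ∀ d' a' : ℕ, 0 < d' → d' < d → a' < n →
      ((d' : ZMod m), (0 : ZMod n)) +ᵥ x ≠ ((0 : ZMod m), (a' : ZMod n)) +ᵥ x) :
    d ∣ m ∧ m / d = n / Nat.gcd n a ∧ (d = m ↔ a = 0) := by
  have hm : 0 < m := Nat.pos_of_ne_zero (NeZero.ne m)
  have hn : 0 < n := Nat.pos_of_ne_zero (NeZero.ne n)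
  -- key: (k*d, 0) +ᵥ x = (0, k*a) +ᵥ x for all k
  have key : ∀ k : ℕ, (((k*d : ℕ) : ZMod m), (0:ZMod n)) +ᵥ x
      = ((0:ZMod m), ((k*a : ℕ) : ZMod n)) +ᵥ x := by
    intro k
    induction k with
    | zero => simp
    | succ k ih =>
      have c1 : (((k+1)*d : ℕ) : ZMod m) = ((k*d : ℕ) : ZMod m) + (d : ZMod m) := by
        push_cast; ring
      have c2 : (((k+1)*a : ℕ) : ZMod n) = ((k*a : ℕ) : ZMod n) + (a : ZMod n) := by
        push_cast; ring
      have e1 : ((((k+1)*d : ℕ) : ZMod m), (0:ZMod n))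
          = (((k*d : ℕ) : ZMod m), (0:ZMod n)) + ((d : ZMod m), (0:ZMod n)) := by
        rw [Prod.mk_add_mk, add_zero, c1]
      have e2 : ((0:ZMod m), (((k+1)*a : ℕ) : ZMod n))
          = ((0:ZMod m), ((k*a : ℕ) : ZMod n)) + ((0 : ZMod m), (a : ZMod n)) := by
        rw [Prod.mk_add_mk, add_zero, c2]
      rw [e1, e2, add_vadd, add_vadd, htype, vadd_vadd, vadd_vadd, add_comm]
      rw [add_vadd, ih, vadd_vadd, add_comm]
  -- d divides m
  have hdm : d ∣ m := by
    by_contra hnd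
    set q := m / d with hq
    set r := m % d with hr
    have hrpos : 0 < r := Nat.pos_of_ne_zero (fun h => hnd (Nat.dvd_of_mod_eq_zero h))
    have hrlt : r < d := Nat.mod_lt _ hd
    set b : ZMod n := -(((q*a : ℕ) : ZMod n)) with hb
    have hbe : ((b.val : ℕ) : ZMod n) = b := ZMod.natCast_zmod_val b
    have hsplit : ((m : ℕ) : ZMod m) = ((r : ℕ) : ZMod m) + ((q*d : ℕ) : ZMod m) := by
      rw [← Nat.cast_add]
      congr 1
      simp only [hq, hr]
      exact (Nat.mod_add_div' m d).symm
    have h1 : (((r : ℕ) : ZMod m), (0:ZMod n)) +ᵥ ((((q*d:ℕ):ZMod m), (0:ZMod n)) +ᵥ x) = x := by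
      rw [vadd_vadd]
      have : (((r : ℕ) : ZMod m), (0:ZMod n)) + (((q*d:ℕ):ZMod m), (0:ZMod n))
          = (((m : ℕ) : ZMod m), (0:ZMod n)) := by
        rw [hsplit]; simp
      rw [this]
      simp
      rw [show (((0:ZMod m), (0:ZMod n)) : ZMod m × ZMod n) = 0 from rfl, zero_vadd]
    rw [key q] at h1
    -- h1 : (r,0) +ᵥ ((0, qa) +ᵥ x) = x
    have h2 : (((r : ℕ) : ZMod m), (0:ZMod n)) +ᵥ x = ((0:ZMod m), ((b.val : ℕ) : ZMod n)) +ᵥ x := by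
      rw [hbe]
      have := congrArg (fun y => ((0:ZMod m), b) +ᵥ y) h1
      rw [← this, vadd_vadd, vadd_vadd]
      congr 1
      rw [hb]
      ext <;> simp
    exact hmin r b.val hrpos hrlt (ZMod.val_lt b) h2
  -- m/d = n / gcd n a
  have he : addOrderOf ((a : ZMod n)) = n / Nat.gcd n a := ZMod.addOrderOf_coe a (NeZero.ne n)
  set e := n / Nat.gcd n a with heq
  have hmd_eq : m / d = e := by
    have hdvd1 : e ∣ m / d := by
      rw [← he, addOrderOf_dvd_iff_nsmul_eq_zero]
      have h1 := key (m / d)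
      rw [Nat.div_mul_cancel hdm] at h1
      simp only [ZMod.natCast_self] at h1
      rw [show (((0:ZMod m), (0:ZMod n)) : ZMod m × ZMod n) = 0 from rfl, zero_vadd] at h1
      have := hfree₂ (((m/d)*a : ℕ) : ZMod n) x h1.symm
      rw [nsmul_eq_mul]
      push_cast at this ⊢
      exact this
    have hdvd2 : m / d ∣ e := by
      have h1 := key e
      have hea : ((e*a : ℕ) : ZMod n) = 0 := by
        have := addOrderOf_nsmul_eq_zero ((a : ZMod n))
        rw [he] at this
        rw [nsmul_eq_mul] at this
        push_cast
        exact_mod_cast this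
      rw [hea] at h1
      rw [show (((0:ZMod m), (0:ZMod n)) : ZMod m × ZMod n) = 0 from rfl, zero_vadd] at h1
      have hz := hfree₁ ((e*d : ℕ) : ZMod m) x h1
      have hmed : m ∣ e * d := by
        rwa [ZMod.natCast_eq_zero_iff] at hz
      have : (m/d) * d ∣ e * d := by rwa [Nat.div_mul_cancel hdm]
      exact (Nat.mul_dvd_mul_iff_right hd).mp this
    exact Nat.dvd_antisymm hdvd2 hdvd1
  refine ⟨hdm, hmd_eq, ?_, ?_⟩
  · intro hdmm
    have h1 : m / d = 1 := by rw [hdmm]; exact Nat.div_self hm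
    have h2 : n / Nat.gcd n a = 1 := by rw [← heq, ← hmd_eq]; exact h1
    have hg : Nat.gcd n a = n := by
      have hgd : Nat.gcd n a ∣ n := Nat.gcd_dvd_left n a
      have h3 := Nat.div_mul_cancel hgd
      rw [h2, one_mul] at h3
      exact h3
    have : n ∣ a := hg ▸ Nat.gcd_dvd_right n a
    exact Nat.eq_zero_of_dvd_of_lt this ha
  · intro ha0
    subst ha0
    rw [Nat.cast_zero] at htype
    have : (((0:ZMod m), (0:ZMod n)) : ZMod m × ZMod n) +ᵥ x = x := by
      rw [show (((0:ZMod m), (0:ZMod n)) : ZMod m × ZMod n) = 0 from rfl, zero_vadd]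
    rw [this] at htype
    have hz := hfree₁ ((d : ℕ) : ZMod m) x htype
    have hmdv : m ∣ d := by rwa [ZMod.natCast_eq_zero_iff] at hz
    exact Nat.dvd_antisymm hdm hmdv
end
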